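/- If K : [0,1] × [0,1] → ℝ is a bounded measurable function and l_n(s,t) = (1/n) ∑_{k=1}^n 2 sin(kπs) sin(kπt), then lim_{n→∞} ∫_0^1 ∫_0^t K(s,t) l_n(s,t)² ds dt = 0. -/

import Mathlib

open Real Finset Filter MeasureTheory

noncomputable def lKer (n : ℕ) (s t : ℝ) : ℝ :=
  (1 / (n:ℝ)) * ∑ k ∈ Finset.Icc 1 n, 2 * Real.sin (k * π * s) * Real.sin (k * π * t)

lemma integral_cos_mul_eq_zero {c : ℝ} (hc : c ≠ 0) (hs : Real.sin c = 0) :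
    ∫ s in (0:ℝ)..1, Real.cos (c * s) = 0 := by
  rw [intervalIntegral.integral_comp_mul_left (fun x => Real.cos x) hc]
  simp [integral_cos, hs]

lemma sin_orth (j k : ℕ) (hj : 1 ≤ j) (hk : 1 ≤ k) :
    ∫ s in (0:ℝ)..1, Real.sin (j*π*s) * Real.sin (k*π*s) = if j = k then (1/2:ℝ) else 0 := by
  have hrw : ∀ s : ℝ, Real.sin (j*π*s) * Real.sin (k*π*s)
      = Real.cos ((((j:ℝ)-k)*π)*s) / 2 - Real.cos ((((j:ℝ)+k)*π)*s) / 2 := by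
    intro s
    rw [show (((j:ℝ)-k)*π)*s = ↑j*π*s - ↑k*π*s by ring,
        show (((j:ℝ)+k)*π)*s = ↑j*π*s + ↑k*π*s by ring,
        Real.cos_sub, Real.cos_add]; ring
  simp_rw [hrw]
  rw [intervalIntegral.integral_sub (Continuous.intervalIntegrable (by fun_prop) _ _) (Continuous.intervalIntegrable (by fun_prop) _ _)]
  rw [intervalIntegral.integral_div, intervalIntegral.integral_div]
  have h2 : ∫ s in (0:ℝ)..1, Real.cos ((((j:ℝ)+k)*π)*s) = 0 := by
    apply integral_cos_mul_eq_zero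
    · have : (0:ℝ) < ((j:ℝ)+k)*π := by positivity
      exact this.ne'
    · have : ((j:ℝ)+k)*π = ((j+k:ℕ):ℝ)*π := by push_cast; ring
      rw [this, Real.sin_nat_mul_pi]
  by_cases h : j = k
  · subst h
    have h0 : ((j:ℝ)-j)*π = 0 := by ring
    rw [h0, if_pos rfl, h2]
    norm_num
  · have h1 : ∫ s in (0:ℝ)..1, Real.cos ((((j:ℝ)-k)*π)*s) = 0 := by
      apply integral_cos_mul_eq_zero
      · have : (j:ℝ) ≠ k := by exact_mod_cast h
        have : (j:ℝ) - k ≠ 0 := sub_ne_zero.mpr this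
        positivity
      · have : ((j:ℝ)-k)*π = (((j:ℤ)-k : ℤ):ℝ)*π := by push_cast; ring
        rw [this, Real.sin_int_mul_pi]
    rw [h1, h2, if_neg h]
    norm_num

lemma lKer_cont (n : ℕ) (t : ℝ) : Continuous (fun s => lKer n s t) := by
  unfold lKer; fun_prop

lemma lKer_abs_le (n : ℕ) (s t : ℝ) : |lKer n s t| ≤ 2 := by
  rcases Nat.eq_zero_or_pos n with h|h
  · simp [lKer, h]
  rw [lKer, abs_mul]
  have h1 : |1/(n:ℝ)| = 1/(n:ℝ) := abs_of_nonneg (by positivity)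
  have h2 : |∑ k ∈ Finset.Icc 1 n, 2*Real.sin (k*π*s)*Real.sin (k*π*t)| ≤ 2*n := by
    calc |∑ k ∈ Finset.Icc 1 n, 2*Real.sin (k*π*s)*Real.sin (k*π*t)|
        ≤ ∑ k ∈ Finset.Icc 1 n, |2*Real.sin (k*π*s)*Real.sin (k*π*t)| :=
          Finset.abs_sum_le_sum_abs _ _
      _ ≤ ∑ _k ∈ Finset.Icc 1 n, 2 := by
          refine Finset.sum_le_sum fun k _ => ?_
          rw [abs_mul, abs_mul, abs_two]
          calc 2 * |Real.sin (k*π*s)| * |Real.sin (k*π*t)| ≤ 2 * 1 * 1 := by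
                gcongr
                · exact Real.abs_sin_le_one _
                · exact Real.abs_sin_le_one _
            _ = 2 := by ring
      _ = 2*n := by
          rw [Finset.sum_const, Nat.card_Icc]
          simp [mul_comm]
  have hn : (0:ℝ) < n := by exact_mod_cast h
  calc |1/(n:ℝ)| * |∑ k ∈ Finset.Icc 1 n, 2*Real.sin (k*π*s)*Real.sin (k*π*t)|
      ≤ (1/(n:ℝ)) * (2*n) := by rw [h1]; gcongr
    _ = 2 := by field_simp

lemma lKer_sq_eq (n : ℕ) (s t : ℝ) :
    (lKer n s t)^2 = ∑ j ∈ Finset.Icc 1 n, ∑ k ∈ Finset.Icc 1 n,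
      (4 * Real.sin (j*π*t) * Real.sin (k*π*t) / (n:ℝ)^2) *
        (Real.sin (j*π*s) * Real.sin (k*π*s)) := by
  have h : (lKer n s t)^2 = (1/(n:ℝ))^2 *
      ((∑ k ∈ Finset.Icc 1 n, 2 * Real.sin (k*π*s) * Real.sin (k*π*t)) *
       (∑ k ∈ Finset.Icc 1 n, 2 * Real.sin (k*π*s) * Real.sin (k*π*t))) := by
    rw [lKer]; ring
  rw [h, Finset.sum_mul_sum, Finset.mul_sum]
  refine Finset.sum_congr rfl fun j _ => ?_
  rw [Finset.mul_sum]
  refine Finset.sum_congr rfl fun k _ => ?_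
  field_simp
  ring

lemma inner_l_sq (n : ℕ) (t : ℝ) :
    ∫ s in (0:ℝ)..1, (lKer n s t)^2
      = (2/(n:ℝ)^2) * ∑ k ∈ Finset.Icc 1 n, Real.sin ((k:ℝ)*π*t)^2 := by
  simp_rw [lKer_sq_eq]
  rw [intervalIntegral.integral_finset_sum
    (fun j _ => Continuous.intervalIntegrable (by fun_prop) _ _)]
  have step : ∀ j ∈ Finset.Icc 1 n,
      (∫ s in (0:ℝ)..1, ∑ k ∈ Finset.Icc 1 n,
        (4 * Real.sin (j*π*t) * Real.sin (k*π*t) / (n:ℝ)^2) *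
          (Real.sin (j*π*s) * Real.sin (k*π*s)))
      = (2 / (n:ℝ)^2) * Real.sin ((j:ℝ)*π*t)^2 := by
    intro j hj
    rw [intervalIntegral.integral_finset_sum
      (fun k _ => Continuous.intervalIntegrable (by fun_prop) _ _)]
    have hj1 : 1 ≤ j := (Finset.mem_Icc.mp hj).1
    have step2 : ∀ k ∈ Finset.Icc 1 n,
        (∫ s in (0:ℝ)..1,
          (4 * Real.sin (j*π*t) * Real.sin (k*π*t) / (n:ℝ)^2) *
            (Real.sin (j*π*s) * Real.sin (k*π*s)))
        = if j = k then (2 / (n:ℝ)^2) * Real.sin ((j:ℝ)*π*t)^2 else 0 := by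
      intro k hk
      rw [intervalIntegral.integral_const_mul,
        sin_orth j k hj1 (Finset.mem_Icc.mp hk).1]
      by_cases h : j = k
      · subst h; rw [if_pos rfl, if_pos rfl]; ring
      · rw [if_neg h, if_neg h, mul_zero]
    rw [Finset.sum_congr rfl step2, Finset.sum_ite_eq (Finset.Icc 1 n) j
      (fun _ => (2 / (n:ℝ)^2) * Real.sin ((j:ℝ)*π*t)^2), if_pos hj]
  rw [Finset.sum_congr rfl step, Finset.mul_sum]

lemma sin_sq_sum_le (n : ℕ) (t : ℝ) :
    ∑ k ∈ Finset.Icc 1 n, Real.sin ((k:ℝ)*π*t)^2 ≤ (n:ℝ) := by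
  calc ∑ k ∈ Finset.Icc 1 n, Real.sin ((k:ℝ)*π*t)^2
      ≤ ∑ _k ∈ Finset.Icc 1 n, (1:ℝ) :=
        Finset.sum_le_sum fun k _ => Real.sin_sq_le_one _
    _ = (n:ℝ) := by simp [Nat.card_Icc]

theorem cesaro_kernel_sq_integral (K : ℝ → ℝ → ℝ)
    (hK : Measurable (Function.uncurry K))
    (hKb : ∃ C : ℝ, ∀ s t : ℝ, s ∈ Set.Icc (0:ℝ) 1 → t ∈ Set.Icc (0:ℝ) 1 →
      |K s t| ≤ C) :
    Tendsto (fun n : ℕ =>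
        ∫ t in (0:ℝ)..1, ∫ s in (0:ℝ)..t, K s t * (lKer n s t)^2)
      atTop (nhds 0) := by
  obtain ⟨C, hb⟩ := hKb
  have hC0 : 0 ≤ C :=
    (abs_nonneg _).trans (hb 0 0 ⟨le_rfl, zero_le_one⟩ ⟨le_rfl, zero_le_one⟩)
  have key : ∀ n : ℕ,
      ‖∫ t in (0:ℝ)..1, ∫ s in (0:ℝ)..t, K s t * (lKer n s t)^2‖ ≤ 2*C/n := by
    intro n
    have hbd : ∀ t ∈ Set.uIoc (0:ℝ) 1,
        ‖∫ s in (0:ℝ)..t, K s t * (lKer n s t)^2‖ ≤ 2*C/n := by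
      intro t ht
      rw [Set.uIoc_of_le zero_le_one] at ht
      have ht0 : (0:ℝ) ≤ t := ht.1.le
      have ht1 : t ≤ 1 := ht.2
      -- measurability of the section
      have hmeasf : Measurable fun s => K s t * (lKer n s t)^2 := by
        have h1 : Measurable fun s : ℝ => K s t :=
          hK.comp (measurable_id.prodMk measurable_const)
        exact h1.mul (((lKer_cont n t).pow 2).measurable)
      have hptIcc : ∀ s ∈ Set.Icc (0:ℝ) t,
          ‖K s t * (lKer n s t)^2‖ ≤ C * (lKer n s t)^2 := by
        intro s hs
        rw [Real.norm_eq_abs, abs_mul, abs_of_nonneg (sq_nonneg (lKer n s t))]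
        exact mul_le_mul_of_nonneg_right
          (hb s t ⟨hs.1, hs.2.trans ht1⟩ ⟨ht0, ht1⟩) (sq_nonneg _)
      have hfint : IntervalIntegrable (fun s => K s t * (lKer n s t)^2) volume 0 t := by
        rw [intervalIntegrable_iff]
        refine ((integrableOn_const_iff (C := C*4)).mpr (Or.inr measure_Ioc_lt_top)).mono' hmeasf.aestronglyMeasurable ?_
        rw [ae_restrict_iff' measurableSet_Ioc]
        filter_upwards with s hs0
        have hs : s ∈ Set.Ioc 0 t := by
          rwa [min_eq_left ht0, max_eq_right ht0] at hs0
        have h4 : (lKer n s t)^2 ≤ 4 := by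
          have h2 := lKer_abs_le n s t
          have h3 := abs_nonneg (lKer n s t)
          nlinarith [sq_abs (lKer n s t)]
        calc ‖K s t * (lKer n s t)^2‖ ≤ C * (lKer n s t)^2 :=
              hptIcc s ⟨hs.1.le, hs.2⟩
          _ ≤ C * 4 := by gcongr
      have hgint : IntervalIntegrable (fun s => C * (lKer n s t)^2) volume 0 t :=
        Continuous.intervalIntegrable (continuous_const.mul ((lKer_cont n t).pow 2)) _ _
      calc ‖∫ s in (0:ℝ)..t, K s t * (lKer n s t)^2‖
          ≤ |∫ s in (0:ℝ)..t, ‖K s t * (lKer n s t)^2‖| :=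
            intervalIntegral.norm_integral_le_abs_integral_norm
        _ = ∫ s in (0:ℝ)..t, ‖K s t * (lKer n s t)^2‖ :=
            abs_of_nonneg (intervalIntegral.integral_nonneg ht0
              (fun s _ => norm_nonneg _))
        _ ≤ ∫ s in (0:ℝ)..t, C * (lKer n s t)^2 :=
            intervalIntegral.integral_mono_on ht0 hfint.norm hgint hptIcc
        _ ≤ ∫ s in (0:ℝ)..1, C * (lKer n s t)^2 :=
            intervalIntegral.integral_mono_interval le_rfl ht0 ht1
              (Eventually.of_forall fun s => by positivity)
              (Continuous.intervalIntegrable (continuous_const.mul ((lKer_cont n t).pow 2)) _ _)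
        _ = C * ∫ s in (0:ℝ)..1, (lKer n s t)^2 :=
            intervalIntegral.integral_const_mul _ _
        _ = C * ((2/(n:ℝ)^2) * ∑ k ∈ Finset.Icc 1 n, Real.sin ((k:ℝ)*π*t)^2) := by
            rw [inner_l_sq]
        _ ≤ 2*C/n := by
            rcases Nat.eq_zero_or_pos n with h|h
            · simp [h]
            have hn : (0:ℝ) < n := by exact_mod_cast h
            calc C * ((2/(n:ℝ)^2) * ∑ k ∈ Finset.Icc 1 n, Real.sin ((k:ℝ)*π*t)^2)
                ≤ C * ((2/(n:ℝ)^2) * n) := by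
                  gcongr
                  exact sin_sq_sum_le n t
              _ = 2*C/n := by field_simp
    calc ‖∫ t in (0:ℝ)..1, ∫ s in (0:ℝ)..t, K s t * (lKer n s t)^2‖
        ≤ 2*C/n * |1 - 0| :=
          intervalIntegral.norm_integral_le_of_norm_le_const hbd
      _ = 2*C/n := by norm_num
  exact squeeze_zero_norm key (tendsto_const_div_atTop_nhds_zero_nat (2*C))
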